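/- For n = 3, define h₀(x) = −√3/3 + (x²(1+x)/(1+x+x²))·(1/(1−x+x²)^{3/2} − 1/(1+x)³) and h₁(x) = √3/(3(1−x³)) − (x³/(1−x³))·(1/(1+x)² + (2−x)/(1−x+x²)^{3/2}). Then for every x > 1 one has h₀′(x) < 0 and h₀′(x) + h₁′(x) < 0; consequently, for every ε ∈ (0,1), the function x ↦ h₀(x) + (1−ε)·h₁(x) is strictly decreasing on (1, ∞), so for every μ the equation h₀(x) + (1−ε)·h₁(x) = μ has at most one solution x > 1. -/

import Mathlib

/-!
Both derivatives have closed forms that are rational in `x` and `√(1 - x + x²)`. On `x > 1`,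
the negativity of `h₀′` and of `h₀′ + h₁′` (after bounding the `√3` term of `h₁′` by `√3 < 26/15`)
reduces to an inequality `a · √q < R` with `q = 1 - x + x²` and `R > 0`; squaring turns it into a polynomial
inequality whose difference, written in `t = x - 1`, has only positive coefficients.
For `ε ∈ (0, 1)` the derivative of `h₀ + (1 - ε) h₁` is the convex combination
`ε h₀′ + (1 - ε)(h₀′ + h₁′) < 0`.
-/

/-- For `n = 3`:
`h₀(x) = −√3/3 + (x²(1+x)/(1+x+x²))·(1/(1−x+x²)^{3/2} − 1/(1+x)³)`. -/
noncomputable def h0₃ (x : ℝ) : ℝ :=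
  -(Real.sqrt 3 / 3) + x ^ 2 * (1 + x) / (1 + x + x ^ 2) *
    (1 / (1 - x + x ^ 2) ^ ((3 : ℝ) / 2) - 1 / (1 + x) ^ 3)

/-- For `n = 3`:
`h₁(x) = √3/(3(1−x³)) − (x³/(1−x³))·(1/(1+x)² + (2−x)/(1−x+x²)^{3/2})`. -/
noncomputable def h1₃ (x : ℝ) : ℝ :=
  Real.sqrt 3 / (3 * (1 - x ^ 3)) - x ^ 3 / (1 - x ^ 3) *
    (1 / (1 + x) ^ 2 + (2 - x) / (1 - x + x ^ 2) ^ ((3 : ℝ) / 2))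

lemma one_sub_add_sq_pos (x : ℝ) : 0 < 1 - x + x ^ 2 := by nlinarith [sq_nonneg (x - 1 / 2)]

lemma one_add_add_sq_pos (x : ℝ) : 0 < 1 + x + x ^ 2 := by nlinarith [sq_nonneg (x + 1 / 2)]

lemma rpow_three_halves_eq_mul_sqrt {a : ℝ} (ha : 0 ≤ a) : a ^ ((3 : ℝ) / 2) = a * √a := by
  rw [show (3 : ℝ) / 2 = 1 + 1 / 2 by norm_num, Real.rpow_add' ha (by norm_num), Real.rpow_one,
    Real.sqrt_eq_rpow]

lemma hasDerivAt_one_sub_add_sq_rpow (x : ℝ) :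
    HasDerivAt (fun y : ℝ => (1 - y + y ^ 2) ^ ((3 : ℝ) / 2))
      ((2 * x - 1) * (3 / 2) * √(1 - x + x ^ 2)) x := by
  have hq : HasDerivAt (fun y : ℝ => 1 - y + y ^ 2) (2 * x - 1) x := by
    refine (((hasDerivAt_id' x).const_sub 1).add (hasDerivAt_pow 2 x)).congr_deriv ?_
    push_cast; ring
  convert hq.rpow_const (p := 3 / 2) (Or.inr (by norm_num)) using 2
  rw [Real.sqrt_eq_rpow]; norm_num

noncomputable def h0₃' (x : ℝ) : ℝ :=
  x * (x - 1) * (2 * x ^ 2 + 3 * x + 2) / ((1 + x + x ^ 2) ^ 2 * (1 + x) ^ 3)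
    - x * (x - 1) * (4 * x ^ 4 + 11 * x ^ 3 + 11 * x ^ 2 + 11 * x + 4) /
      (2 * (1 + x + x ^ 2) ^ 2 * (1 - x + x ^ 2) ^ 2 * √(1 - x + x ^ 2))

noncomputable def h1₃' (x : ℝ) : ℝ :=
  √3 * x ^ 2 / (1 - x ^ 3) ^ 2
    + (-3 * x ^ 2 - x ^ 3 - 2 * x ^ 6) / ((x - 1) ^ 2 * (1 + x + x ^ 2) ^ 2 * (1 + x) ^ 3)
    + (-12 * x ^ 2 + 14 * x ^ 3 - 5 * x ^ 4 + 2 * x ^ 5 + 4 * x ^ 6 - 13 * x ^ 7 + 4 * x ^ 8) /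
      (2 * (x - 1) ^ 2 * (1 + x + x ^ 2) ^ 2 * (1 - x + x ^ 2) ^ 2 * √(1 - x + x ^ 2))

lemma one_sub_pow_three_ne_zero {x : ℝ} (hx : x ≠ 1) : 1 - x ^ 3 ≠ 0 := by
  rw [show 1 - x ^ 3 = -((x - 1) * (1 + x + x ^ 2)) by ring]
  exact neg_ne_zero.2 (mul_ne_zero (sub_ne_zero.2 hx) (one_add_add_sq_pos x).ne')

lemma one_sub_add_sq_rpow_ne_zero (x : ℝ) : (1 - x + x ^ 2) ^ ((3 : ℝ) / 2) ≠ 0 :=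
  (Real.rpow_pos_of_pos (one_sub_add_sq_pos x) _).ne'

lemma hasDerivAt_h0₃ {x : ℝ} (hx : 1 + x ≠ 0) : HasDerivAt h0₃ (h0₃' x) x := by
  have hq := one_sub_add_sq_pos x
  have hp := (one_add_add_sq_pos x).ne'
  have h1x : HasDerivAt (fun y : ℝ => 1 + y) 1 x := (hasDerivAt_id x).const_add 1
  have h := ((((hasDerivAt_pow 2 x).mul h1x).div (h1x.add (hasDerivAt_pow 2 x)) hp).mul
    (((hasDerivAt_const x 1).div (hasDerivAt_one_sub_add_sq_rpow x)
      (one_sub_add_sq_rpow_ne_zero x)).sub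
    ((hasDerivAt_const x 1).div (h1x.pow 3) (pow_ne_zero 3 hx)))).const_add (-(√3 / 3))
  refine h.congr_deriv ?_
  simp only [Pi.add_apply, Pi.sub_apply, Pi.mul_apply, Pi.div_apply, Pi.pow_apply,
    rpow_three_halves_eq_mul_sqrt hq.le, h0₃']
  field_simp
  ring

lemma hasDerivAt_h1₃ {x : ℝ} (hx : 1 + x ≠ 0) (hx1 : x ≠ 1) : HasDerivAt h1₃ (h1₃' x) x := by
  have hq := one_sub_add_sq_pos x
  have hp := (one_add_add_sq_pos x).ne'
  have hw := one_sub_pow_three_ne_zero hx1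
  have h1x : HasDerivAt (fun y : ℝ => 1 + y) 1 x := (hasDerivAt_id x).const_add 1
  have hw' : HasDerivAt (fun y : ℝ => 1 - y ^ 3) (-(3 * x ^ 2)) x := by
    refine ((hasDerivAt_pow 3 x).const_sub 1).congr_deriv ?_
    push_cast; ring
  have h := ((hasDerivAt_const x (√3)).div (hw'.const_mul 3) (mul_ne_zero three_ne_zero hw)).sub
    (((hasDerivAt_pow 3 x).div hw' hw).mul
      (((hasDerivAt_const x 1).div (h1x.pow 2) (pow_ne_zero 2 hx)).add
        (((hasDerivAt_id x).const_sub 2).div (hasDerivAt_one_sub_add_sq_rpow x)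
          (one_sub_add_sq_rpow_ne_zero x))))
  refine h.congr_deriv ?_
  simp only [Pi.add_apply, Pi.div_apply, Pi.pow_apply, id_eq, rpow_three_halves_eq_mul_sqrt hq.le, h1₃']
  field_simp
  ring

lemma mul_sqrt_lt_of_sq_mul_lt {a q R : ℝ} (hR : 0 < R) (h : a ^ 2 * q < R ^ 2) : a * √q < R :=
  calc a * √q ≤ |a| * √q := by gcongr; exact le_abs_self a
    _ = √(a ^ 2 * q) := by rw [Real.sqrt_mul (sq_nonneg a), Real.sqrt_sq_eq_abs]
    _ < R := (Real.sqrt_lt' hR).2 h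

lemma h0₃'_neg {x : ℝ} (hx : 1 < x) : h0₃' x < 0 := by
  have hq := one_sub_add_sq_pos x
  have hx0 : 0 < x := by linarith
  have hkey : 2 * (2 * x ^ 2 + 3 * x + 2) * (1 - x + x ^ 2) ^ 2 * √(1 - x + x ^ 2)
      < (4 * x ^ 4 + 11 * x ^ 3 + 11 * x ^ 2 + 11 * x + 4) * (1 + x) ^ 3 := by
    refine mul_sqrt_lt_of_sq_mul_lt (by positivity) ?_
    obtain ⟨t, ht, rfl⟩ : ∃ t, 0 < t ∧ x = 1 + t := ⟨x - 1, by linarith, by ring⟩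
    rw [← sub_pos]
    ring_nf
    positivity
  have hfactor : h0₃' x = x * (x - 1) / (2 * (1 + x + x ^ 2) ^ 2 * (1 + x) ^ 3 *
        (1 - x + x ^ 2) ^ 2 * √(1 - x + x ^ 2)) *
      (2 * (2 * x ^ 2 + 3 * x + 2) * (1 - x + x ^ 2) ^ 2 * √(1 - x + x ^ 2)
        - (4 * x ^ 4 + 11 * x ^ 3 + 11 * x ^ 2 + 11 * x + 4) * (1 + x) ^ 3) := by
    unfold h0₃'
    field_simp
  rw [hfactor]
  exact mul_neg_of_pos_of_neg (div_pos (mul_pos hx0 (by linarith)) (by positivity))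
    (sub_neg.2 hkey)

lemma h0₃'_add_h1₃'_neg {x : ℝ} (hx : 1 < x) : h0₃' x + h1₃' x < 0 := by
  have hq := one_sub_add_sq_pos x
  have hx1 : 0 < x - 1 := by linarith
  have hw := one_sub_pow_three_ne_zero hx.ne'
  have hM : 0 < -4 * x + 13 * x ^ 2 - 4 * x ^ 3 - 2 * x ^ 4 + 5 * x ^ 5 - 14 * x ^ 6 + 12 * x ^ 7 := by
    obtain ⟨t, ht, rfl⟩ : ∃ t, 0 < t ∧ x = 1 + t := ⟨x - 1, by linarith, by ring⟩
    ring_nf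
    positivity
  have hkey : 2 * (-30 * x + 26 * x ^ 2 + 78 * x ^ 3 + 63 * x ^ 4 - 19 * x ^ 5) *
        (1 - x + x ^ 2) ^ 2 * √(1 - x + x ^ 2)
      < 15 * (-4 * x + 13 * x ^ 2 - 4 * x ^ 3 - 2 * x ^ 4 + 5 * x ^ 5 - 14 * x ^ 6 + 12 * x ^ 7) *
        (1 + x) ^ 3 := by
    refine mul_sqrt_lt_of_sq_mul_lt (by positivity) ?_
    obtain ⟨t, ht, rfl⟩ : ∃ t, 0 < t ∧ x = 1 + t := ⟨x - 1, by linarith, by ring⟩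
    rw [← sub_pos]
    ring_nf
    positivity
  have hsplit : h0₃' x + h1₃' x = (√3 - 26 / 15) * (x ^ 2 / (1 - x ^ 3) ^ 2)
      + (2 * (-30 * x + 26 * x ^ 2 + 78 * x ^ 3 + 63 * x ^ 4 - 19 * x ^ 5) *
          (1 - x + x ^ 2) ^ 2 * √(1 - x + x ^ 2)
        - 15 * (-4 * x + 13 * x ^ 2 - 4 * x ^ 3 - 2 * x ^ 4 + 5 * x ^ 5 - 14 * x ^ 6 + 12 * x ^ 7) *
          (1 + x) ^ 3)
        / (30 * (x - 1) ^ 2 * (1 + x + x ^ 2) ^ 2 * (1 + x) ^ 3 * (1 - x + x ^ 2) ^ 2 *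
          √(1 - x + x ^ 2)) := by
    unfold h0₃' h1₃'
    field_simp
    ring
  have hsqrt3 : √3 < 26 / 15 := (Real.sqrt_lt' (by norm_num)).2 (by norm_num)
  rw [hsplit]
  exact add_neg (mul_neg_of_neg_of_pos (sub_neg.2 hsqrt3) (by positivity))
    (div_neg_of_neg_of_pos (sub_neg.2 hkey) (by positivity))

lemma h0₃'_add_mul_h1₃'_neg {c x : ℝ} (hc0 : 0 ≤ c) (hc1 : c ≤ 1) (hx : 1 < x) :
    h0₃' x + c * h1₃' x < 0 := by
  rcases hc0.eq_or_lt with rfl | hc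
  · simpa using h0₃'_neg hx
  calc h0₃' x + c * h1₃' x = (1 - c) * h0₃' x + c * (h0₃' x + h1₃' x) := by ring
    _ < 0 := add_neg_of_nonpos_of_neg
        (mul_nonpos_of_nonneg_of_nonpos (sub_nonneg.2 hc1) (h0₃'_neg hx).le)
        (mul_neg_of_pos_of_neg hc (h0₃'_add_h1₃'_neg hx))

/-- For `n = 3`: for every `x > 1`, `h₀′(x) < 0` and `h₀′(x) + h₁′(x) < 0`;
hence for every `ε ∈ (0,1)` the map `x ↦ h₀(x) + (1−ε)h₁(x)` is strictly
decreasing on `(1, ∞)`, so `h₀(x) + (1−ε)h₁(x) = μ` has at most one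
solution `x > 1`. -/
theorem n_eq_three_monotone :
    (∀ x : ℝ, 1 < x → deriv h0₃ x < 0 ∧ deriv h0₃ x + deriv h1₃ x < 0) ∧
    (∀ ε ∈ Set.Ioo (0 : ℝ) 1,
      StrictAntiOn (fun x => h0₃ x + (1 - ε) * h1₃ x) (Set.Ioi 1) ∧
      ∀ μ x y : ℝ, 1 < x → 1 < y →
        h0₃ x + (1 - ε) * h1₃ x = μ → h0₃ y + (1 - ε) * h1₃ y = μ → x = y) := by
  have hx' {x : ℝ} (hx : 1 < x) : 1 + x ≠ 0 := by positivity
  have hderiv (c : ℝ) {x : ℝ} (hx : 1 < x) :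
      HasDerivAt (fun y => h0₃ y + c * h1₃ y) (h0₃' x + c * h1₃' x) x :=
    (hasDerivAt_h0₃ (hx' hx)).add ((hasDerivAt_h1₃ (hx' hx) hx.ne').const_mul c)
  refine ⟨fun x hx => ?_, fun ε ⟨hε0, hε1⟩ => ?_⟩
  · rw [(hasDerivAt_h0₃ (hx' hx)).deriv, (hasDerivAt_h1₃ (hx' hx) hx.ne').deriv]
    exact ⟨h0₃'_neg hx, h0₃'_add_h1₃'_neg hx⟩
  · have hanti : StrictAntiOn (fun x => h0₃ x + (1 - ε) * h1₃ x) (Set.Ioi 1) := by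
      refine strictAntiOn_of_deriv_neg (convex_Ioi 1)
        (fun x hx => (hderiv _ hx).continuousAt.continuousWithinAt) fun x hx => ?_
      rw [interior_Ioi] at hx
      rw [(hderiv _ hx).deriv]
      exact h0₃'_add_mul_h1₃'_neg (by linarith) (by linarith) hx
    exact ⟨hanti, fun μ x y hx hy hfx hfy => hanti.injOn hx hy (hfx.trans hfy.symm)⟩
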